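/- arXiv:1711.07842 — 3 statements merged into one kernel-verified Lean document; each statement's English description precedes it below -/
import Mathlib

section
/- Let h(x,ε) = Σ over the listed terms: x - x³ + ε(-x + 4x³ - 3x⁵) + ε²(2x - 20x³) + ε³(-5x + 104x³) + ε⁴(14x) + ε⁵(-42x). Then h_x(x,ε)·(ε h(x,ε)) + h(x,ε) - (x - x³), as a polynomial in x and ε, has no monomial xᵃεᵇ with a + b ≤ 6; i.e., h satisfies the center manifold condition through sixth order. -/
set_option maxHeartbeats 2000000

open MvPolynomial

noncomputable def mono (a b : ℕ) (c : ℝ) : MvPolynomial (Fin 2) ℝ :=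
  monomial (Finsupp.single 0 a + Finsupp.single 1 b) c

lemma mono_eq (a b : ℕ) (c : ℝ) : mono a b c = C c * X 0 ^ a * X 1 ^ b := by
  simp [mono, X_pow_eq_monomial, monomial_mul, C_mul_monomial]

lemma pderiv_ofNat' (n : ℕ) [n.AtLeastTwo] :
    pderiv (0 : Fin 2) (no_index (OfNat.ofNat n) : MvPolynomial (Fin 2) ℝ) = 0 := by
  rw [← map_ofNat (C : ℝ →+* MvPolynomial (Fin 2) ℝ) n, pderiv_C]

lemma coeff_mono (a b : ℕ) (c : ℝ) (m : Fin 2 →₀ ℕ) (hm : ¬ (6 < m 0 + m 1)) (hab : 6 < a + b) :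
    coeff m (mono a b c) = 0 := by
  rw [mono, coeff_monomial, if_neg]
  intro h
  apply hm
  have h0 := DFunLike.congr_fun h 0
  have h1 := DFunLike.congr_fun h 1
  simp [Finsupp.single_apply] at h0 h1
  omega

/-- The sixth-order expansion
h(x,ε) = x - x³ + ε(-x + 4x³ - 3x⁵) + ε²(2x - 20x³) + ε³(-5x + 104x³)
         + ε⁴(14x) + ε⁵(-42x)
satisfies the center manifold condition h_x·(ε h) = -h + x - x³ through sixth
order: the residual h_x·(ε h) + h - (x - x³) has no monomial xᵃεᵇ with a + b ≤ 6. -/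
theorem duffing_center_manifold_sixth_order
    (x ε h : MvPolynomial (Fin 2) ℝ)
    (hx : x = X 0) (hε : ε = X 1)
    (hh : h = (x - x ^ 3) + ε * (-x + 4 * x ^ 3 - 3 * x ^ 5)
        + ε ^ 2 * (2 * x - 20 * x ^ 3) + ε ^ 3 * (-5 * x + 104 * x ^ 3)
        + ε ^ 4 * (14 * x) + ε ^ 5 * (-42 * x)) :
    ∀ m ∈ ((pderiv 0 h) * (ε * h) + h - (x - x ^ 3)).support,
      ¬ (m 0 + m 1 ≤ 6) := by
  have hres : (pderiv 0 h) * (ε * h) + h - (x - x ^ 3) = mono 1 6 (-132) + mono 1 7 (165) + mono 1 8 (-308) + mono 1 9 (616) + mono 1 10 (-1176) + mono 1 11 (1764) + mono 3 4 (548) + mono 3 5 (-712) + mono 3 6 (1624) + mono 3 7 (-3872) + mono 3 8 (9184) + mono 3 9 (-17472) + mono 5 2 (-42) + mono 5 3 (186) + mono 5 4 (-1140) + mono 5 5 (3786) + mono 5 6 (-12732) + mono 5 7 (33204) + mono 7 2 (24) + mono 7 3 (-96) + mono 7 4 (480) + mono 7 5 (-2496) + mono 9 3 (45) := by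
    subst hh hx hε
    simp only [mono_eq, map_neg, map_ofNat, map_one]
    simp only [map_add, map_sub, map_mul, map_neg, Derivation.leibniz, pderiv_X,
      Derivation.leibniz_pow, smul_eq_mul, pderiv_ofNat', Pi.single_eq_same,
      Derivation.map_one_eq_zero, Pi.single_eq_of_ne (by decide : (1:Fin 2) ≠ 0)]
    ring
  intro m hm hle
  rw [mem_support_iff] at hm
  apply hm
  have hm' : ¬ (6 < m 0 + m 1) := by omega
  rw [hres]
  simp only [coeff_add]
  rw [coeff_mono _ _ _ _ hm' (by norm_num), coeff_mono _ _ _ _ hm' (by norm_num),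
    coeff_mono _ _ _ _ hm' (by norm_num), coeff_mono _ _ _ _ hm' (by norm_num),
    coeff_mono _ _ _ _ hm' (by norm_num), coeff_mono _ _ _ _ hm' (by norm_num),
    coeff_mono _ _ _ _ hm' (by norm_num), coeff_mono _ _ _ _ hm' (by norm_num),
    coeff_mono _ _ _ _ hm' (by norm_num), coeff_mono _ _ _ _ hm' (by norm_num),
    coeff_mono _ _ _ _ hm' (by norm_num), coeff_mono _ _ _ _ hm' (by norm_num),
    coeff_mono _ _ _ _ hm' (by norm_num), coeff_mono _ _ _ _ hm' (by norm_num),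
    coeff_mono _ _ _ _ hm' (by norm_num), coeff_mono _ _ _ _ hm' (by norm_num),
    coeff_mono _ _ _ _ hm' (by norm_num), coeff_mono _ _ _ _ hm' (by norm_num),
    coeff_mono _ _ _ _ hm' (by norm_num), coeff_mono _ _ _ _ hm' (by norm_num),
    coeff_mono _ _ _ _ hm' (by norm_num), coeff_mono _ _ _ _ hm' (by norm_num),
    coeff_mono _ _ _ _ hm' (by norm_num)]
  norm_num
end

section
/- The endemic fixed point of the SEIR model has strictly positive E₀ and I₀ components if and only if the basic reproductive rate R₀ = αβ/((α+μ)(γ+μ)) > 1 (assuming α, β, γ, μ > 0). Specifically, E₀ = μ/(α+μ) - μ(γ+μ)/(αβ) > 0 ⟺ R₀ > 1 ⟺ I₀ = μα/((γ+μ)(α+μ)) - μ/β > 0. -/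
/-- The endemic fixed point of the SEIR model has strictly positive E₀ and I₀
components iff the basic reproductive rate R₀ = αβ/((α+μ)(γ+μ)) exceeds 1. -/
theorem seir_endemic_positive_iff_R0
    (μ β α γ E₀ I₀ R₀ : ℝ)
    (hα : 0 < α) (hβ : 0 < β) (hγ : 0 < γ) (hμ : 0 < μ)
    (hE : E₀ = μ / (α + μ) - μ * (γ + μ) / (α * β))
    (hI : I₀ = μ * α / ((γ + μ) * (α + μ)) - μ / β)
    (hR : R₀ = α * β / ((α + μ) * (γ + μ))) :
    (0 < E₀ ↔ 1 < R₀) ∧ (0 < I₀ ↔ 1 < R₀) := by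
  have hαμ : 0 < α + μ := by linarith
  have hγμ : 0 < γ + μ := by linarith
  have key : 1 < R₀ ↔ (α + μ) * (γ + μ) < α * β := by
    rw [hR, lt_div_iff₀ (by positivity)]; constructor <;> intro h <;> nlinarith
  constructor
  · rw [hE, sub_pos, div_lt_div_iff₀ (by positivity) (by positivity), key]
    constructor <;> intro h <;> nlinarith
  · rw [hI, sub_pos, div_lt_div_iff₀ (by positivity) (by positivity), key]
    constructor <;> intro h <;> nlinarith
end

section
/- For positive parameters with R₀ = αβ/((α+μ)(γ+μ)) > 1, the endemic fixed point components satisfy S₀ = 1/R₀, and S₀ + E₀ + I₀ < 1 (so the recovered fraction R = 1 - S₀ - E₀ - I₀ is positive) provided γ > 0. -/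
/-- For the SEIR endemic state with positive parameters: S₀ = 1/R₀, and if
R₀ = αβ/((α+μ)(γ+μ)) > 1 (with γ > 0) then S₀ + E₀ + I₀ < 1, so the recovered
fraction 1 - S₀ - E₀ - I₀ is positive. -/
theorem seir_endemic_recovered_positive
    (μ β α γ S₀ E₀ I₀ R₀ : ℝ)
    (hα : 0 < α) (hβ : 0 < β) (hγ : 0 < γ) (hμ : 0 < μ)
    (hS : S₀ = (γ + μ) * (α + μ) / (β * α))
    (hE : E₀ = μ / (α + μ) - μ * (γ + μ) / (α * β))
    (hI : I₀ = μ * α / ((γ + μ) * (α + μ)) - μ / β)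
    (hR : R₀ = α * β / ((α + μ) * (γ + μ))) :
    S₀ = 1 / R₀ ∧ (1 < R₀ → S₀ + E₀ + I₀ < 1) := by
  have hαμ : 0 < α + μ := by linarith
  have hγμ : 0 < γ + μ := by linarith
  subst hS hE hI hR
  constructor
  · field_simp
  · intro h1
    rw [lt_div_iff₀ (by positivity), one_mul] at h1
    have h2 : (γ + μ) * (α + μ) / (β * α) + (μ / (α + μ) - μ * (γ + μ) / (α * β)) +
        (μ * α / ((γ + μ) * (α + μ)) - μ / β)
        = ((γ + μ) * (α + μ) * (α * γ) + μ * α * β * (α + μ) + μ * α * β * γ) /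
          (β * α * ((γ + μ) * (α + μ))) := by
      field_simp
      ring
    rw [h2, div_lt_one (by positivity)]
    nlinarith [mul_pos hγ (sub_pos.mpr h1), mul_pos hαμ hγμ]
end
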